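/- Let $b^{(1)}:\mathbb{R}^d\to\mathbb{R}^d$ satisfy, for some $\vartheta> 0$ and $\kappa_0,\kappa_1,\kappa_2>0$, $\frac{\langle x,b^{(1)}(x)\rangle}{\sqrt{1+|x|^2}}\le-\kappa_0|x|^\vartheta+\kappa_1$ and $|b^{(1)}(x)|\le\kappa_2(1+|x|^\vartheta)$. Let $u:\mathbb{R}^d\to\mathbb{R}^d$ be $C^1$ with $\|u\|_\infty<\infty$, set $\Phi(x)=x+u(x)$, assume $\Phi$ is a diffeomorphism with $\tfrac12|x-y|\le|\Phi(x)-\Phi(y)|\le2|x-y|$, and define for $\lambda>0$, $\tilde b(y):=(\lambda u+b^{(1)}\cdot\nabla\Phi)(\Phi^{-1}(y))$. Then if $\|\nabla u\|_\infty$ is sufficiently small (depending on $\kappa_0,\kappa_1,\kappa_2,\vartheta$), there exist $\tilde\kappa_0,\tilde\kappa_1,\tilde\kappa_2>0$ such that for all $y$: $\frac{\langle y,\tilde b(y)\rangle}{\sqrt{1+|y|^2}}\le-\tilde\kappa_0|y|^\vartheta+\tilde\kappa_1$ and $|\tilde b(y)|\le\tilde\kappa_2(1+|y|^\vartheta)$.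 -/

import Mathlib

open scoped RealInnerProductSpace

/-! Write `y = x + u x`, so that `Ψ y = x` and `|‖x‖ - ‖y‖| ≤ ‖u‖_∞`, and put `⟨r⟩ = √(1 + r²)`.
Expanding, `⟪y, b̃ y⟫ = ⟪x, b1 x⟫ + ⟪u x, b1 x⟫ + ⟪y, λ u x + ∇u(x) b1 x⟫`. The first term is
at most `(-κ₀ ‖x‖^ϑ + κ₁) ⟨‖x‖⟩`, the gradient term at most `‖∇u‖_∞ κ₂ (1 + ‖x‖^ϑ) ⟨‖y‖⟩`,
and `⟨‖y‖⟩ ≤ ⟨‖x‖⟩ + ‖u‖_∞`; so once `‖∇u‖_∞ κ₂ ≤ κ₀ / 2` the gradient term costs at most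
half of the leading term `-κ₀ ‖x‖^ϑ ⟨‖x‖⟩`. Everything else is `O(‖x‖^ϑ + ⟨‖y‖⟩)`, and
`‖x‖^ϑ` is absorbed by `‖x‖^ϑ ⟨‖x‖⟩` up to a constant. As `‖x‖^ϑ ⟨‖x‖⟩` and `‖y‖^ϑ ⟨‖y‖⟩`
are comparable up to lower order terms, the bound transfers to `y`, with constants depending on
`‖u‖_∞` and `λ`, while the smallness of `∇u` depends only on `κ₀` and `κ₂`. -/

namespace Real

lemma add_rpow_le_two_rpow_mul_rpow_add_rpow {a b p : ℝ} (ha : 0 ≤ a) (hb : 0 ≤ b)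
    (hp : 0 ≤ p) : (a + b) ^ p ≤ 2 ^ p * (a ^ p + b ^ p) := calc
  (a + b) ^ p ≤ (2 * max a b) ^ p := by rw [two_mul]; gcongr <;> simp
  _ = 2 ^ p * (max a b) ^ p := mul_rpow zero_le_two (le_max_of_le_left ha)
  _ = 2 ^ p * max (a ^ p) (b ^ p) := by rw [rpow_max ha hb hp]
  _ ≤ 2 ^ p * (a ^ p + b ^ p) := by
    gcongr; exact max_le_add_of_nonneg (rpow_nonneg ha p) (rpow_nonneg hb p)

lemma sqrt_one_add_sq_le_add {m n c : ℝ} (hm : 0 ≤ m) (hn : 0 ≤ n) (hc : 0 ≤ c)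
    (h : m ≤ n + c) : √(1 + m ^ 2) ≤ √(1 + n ^ 2) + c := by
  rw [sqrt_le_left (by positivity)]
  have := sq_sqrt (by positivity : (0 : ℝ) ≤ 1 + n ^ 2)
  nlinarith [le_sqrt_of_sq_le (le_add_of_nonneg_left zero_le_one : n ^ 2 ≤ 1 + n ^ 2)]

lemma sqrt_one_add_sq_le_mul {m n c : ℝ} (hm : 0 ≤ m) (hn : 0 ≤ n) (hc : 0 ≤ c)
    (h : m ≤ n + c) : √(1 + m ^ 2) ≤ (1 + c) * √(1 + n ^ 2) := by
  have h1 : 1 ≤ √(1 + n ^ 2) := one_le_sqrt.2 (by nlinarith)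
  nlinarith [sqrt_one_add_sq_le_add hm hn hc h]

lemma mul_rpow_le_mul_rpow_mul_add {a C r s ϑ : ℝ} (ha : 0 < a) (hC : 0 ≤ C) (hϑ : 0 ≤ ϑ)
    (hr : 0 ≤ r) (hrs : r ≤ s) : C * r ^ ϑ ≤ a * r ^ ϑ * s + C * (C / a) ^ ϑ := by
  have hrϑ := rpow_nonneg hr ϑ
  rcases le_total (C / a) s with hs | hs
  · have : C ≤ a * s := (div_le_iff₀' ha).1 hs
    nlinarith [rpow_nonneg (div_nonneg hC ha.le) ϑ]
  · have : r ^ ϑ ≤ (C / a) ^ ϑ := rpow_le_rpow hr (hrs.trans hs) hϑ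
    nlinarith [mul_nonneg (mul_nonneg ha.le hrϑ) (hr.trans hrs)]

lemma rpow_mul_sqrt_one_add_sq_le {m n c ϑ : ℝ} (hm : 0 ≤ m) (hn : 0 ≤ n) (hc : 0 ≤ c) (hϑ : 0 ≤ ϑ)
    (h : m ≤ n + c) :
    m ^ ϑ * √(1 + m ^ 2) ≤ 2 ^ ϑ * ((1 + c) * (n ^ ϑ * √(1 + n ^ 2)) + c ^ ϑ * √(1 + m ^ 2)) :=
  calc m ^ ϑ * √(1 + m ^ 2) ≤ 2 ^ ϑ * (n ^ ϑ + c ^ ϑ) * √(1 + m ^ 2) := by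
        gcongr
        exact (rpow_le_rpow hm h hϑ).trans (add_rpow_le_two_rpow_mul_rpow_add_rpow hn hc hϑ)
    _ ≤ _ := by
        have := mul_le_mul_of_nonneg_left (sqrt_one_add_sq_le_mul hm hn hc h) (rpow_nonneg hn ϑ)
        have h2 : (0 : ℝ) ≤ 2 ^ ϑ := by positivity
        nlinarith

end Real

open Real

section Drift

variable {E : Type*} [NormedAddCommGroup E] [InnerProductSpace ℝ E]

lemma inner_add_smul_add_add_le (x w b v : E) (lam : ℝ) :
    ⟪x + w, lam • w + (b + v)⟫ ≤ ⟪x, b⟫ + ‖w‖ * ‖b‖ + ‖x + w‖ * (|lam| * ‖w‖ + ‖v‖) := by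
  have hsplit : ⟪x + w, lam • w + (b + v)⟫ = ⟪x, b⟫ + ⟪w, b⟫ + ⟪x + w, lam • w + v⟫ := by
    rw [add_left_comm, inner_add_right _ b, inner_add_left]
  have h1 := real_inner_le_norm w b
  have h2 : ⟪x + w, lam • w + v⟫ ≤ ‖x + w‖ * (|lam| * ‖w‖ + ‖v‖) := by
    calc ⟪x + w, lam • w + v⟫ ≤ ‖x + w‖ * ‖lam • w + v‖ := real_inner_le_norm _ _
      _ ≤ ‖x + w‖ * (|lam| * ‖w‖ + ‖v‖) := by
        gcongr; exact (norm_add_le _ _).trans_eq (by rw [norm_smul, norm_eq_abs])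
  linarith

variable {ϑ κ₀ κ₁ κ₂ ε lam Cu : ℝ}

lemma exists_inner_drift_le (hϑ : 0 ≤ ϑ) (hκ₀ : 0 < κ₀) (hκ₁ : 0 ≤ κ₁) (hκ₂ : 0 ≤ κ₂)
    (hCu : 0 ≤ Cu) (hε : 0 ≤ ε) (hεκ : ε * κ₂ ≤ κ₀ / 2) :
    ∃ A > 0, ∀ x w b v : E, ‖w‖ ≤ Cu →
      ⟪x, b⟫ / √(1 + ‖x‖ ^ 2) ≤ -κ₀ * ‖x‖ ^ ϑ + κ₁ → ‖b‖ ≤ κ₂ * (1 + ‖x‖ ^ ϑ) →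
      ‖v‖ ≤ ε * ‖b‖ →
      ⟪x + w, lam • w + (b + v)⟫ ≤
        A * √(1 + ‖x + w‖ ^ 2) - κ₀ / 4 * ‖x‖ ^ ϑ * √(1 + ‖x‖ ^ 2) := by
  set K := Cu * (κ₂ + κ₀ / 2) * (Cu * (κ₂ + κ₀ / 2) / (κ₀ / 4)) ^ ϑ
  refine ⟨κ₁ * (1 + Cu) + |lam| * Cu + κ₀ / 2 + Cu * κ₂ + K,
    by positivity, fun x w b v hw hdiss hgrowth hv => ?_⟩
  set n := ‖x‖
  set m := ‖x + w‖
  have hn : 0 ≤ n := norm_nonneg _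
  have hm : 0 ≤ m := norm_nonneg _
  have hmn : m ≤ n + Cu := (norm_add_le _ _).trans (by gcongr)
  have hnm : n ≤ m + Cu := (norm_le_add_norm_add x w).trans (by gcongr)
  have hSn : 0 < √(1 + n ^ 2) := sqrt_pos.2 (by positivity)
  have hSm : 1 ≤ √(1 + m ^ 2) := one_le_sqrt.2 (by nlinarith)
  have hmSm : m ≤ √(1 + m ^ 2) := le_sqrt_of_sq_le (by linarith)
  have hnϑ : 0 ≤ n ^ ϑ := rpow_nonneg hn ϑ
  have hx : ⟪x, b⟫ ≤ (-κ₀ * n ^ ϑ + κ₁) * √(1 + n ^ 2) := (div_le_iff₀ hSn).1 hdiss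
  have hεb : ε * ‖b‖ ≤ κ₀ / 2 * (1 + n ^ ϑ) := by
    calc ε * ‖b‖ ≤ ε * (κ₂ * (1 + n ^ ϑ)) := by gcongr
      _ ≤ κ₀ / 2 * (1 + n ^ ϑ) := by rw [← mul_assoc]; gcongr
  have hκ₁S := mul_le_mul_of_nonneg_left (sqrt_one_add_sq_le_mul hn hm hCu hnm) hκ₁
  have hSmn := sqrt_one_add_sq_le_add hm hn hCu hmn
  have habsorb : Cu * (κ₂ + κ₀ / 2) * n ^ ϑ ≤ κ₀ / 4 * n ^ ϑ * √(1 + n ^ 2) + K :=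
    mul_rpow_le_mul_rpow_mul_add (by positivity) (by positivity) hϑ hn
      (le_sqrt_of_sq_le (by linarith))
  have hwb : ‖w‖ * ‖b‖ ≤ Cu * (κ₂ * (1 + n ^ ϑ)) := by gcongr
  have hmv :
      m * (|lam| * ‖w‖ + ‖v‖) ≤ √(1 + m ^ 2) * (|lam| * Cu + κ₀ / 2 * (1 + n ^ ϑ)) := by
    gcongr; exact hv.trans hεb
  linarith [inner_add_smul_add_add_le x w b v lam,
    mul_le_mul_of_nonneg_left hSmn (by positivity : 0 ≤ κ₀ / 2 * n ^ ϑ),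
    le_mul_of_one_le_right (by positivity : 0 ≤ K + Cu * κ₂) hSm]

lemma exists_inner_drift_div_le (hϑ : 0 ≤ ϑ) (hκ₀ : 0 < κ₀) (hκ₁ : 0 ≤ κ₁) (hκ₂ : 0 ≤ κ₂)
    (hCu : 0 ≤ Cu) (hε : 0 ≤ ε) (hεκ : ε * κ₂ ≤ κ₀ / 2) :
    ∃ κ₀' > 0, ∃ κ₁' > 0, ∀ x w b v : E, ‖w‖ ≤ Cu →
      ⟪x, b⟫ / √(1 + ‖x‖ ^ 2) ≤ -κ₀ * ‖x‖ ^ ϑ + κ₁ → ‖b‖ ≤ κ₂ * (1 + ‖x‖ ^ ϑ) →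
      ‖v‖ ≤ ε * ‖b‖ →
      ⟪x + w, lam • w + (b + v)⟫ / √(1 + ‖x + w‖ ^ 2) ≤ -κ₀' * ‖x + w‖ ^ ϑ + κ₁' := by
  obtain ⟨A, hA, hinner⟩ :=
    exists_inner_drift_le (E := E) (lam := lam) hϑ hκ₀ hκ₁ hκ₂ hCu hε hεκ
  refine ⟨κ₀ / (4 * 2 ^ ϑ * (1 + Cu)), by positivity, A + κ₀ / 4 * Cu ^ ϑ, by positivity,
    fun x w b v hw hdiss hgrowth hv => ?_⟩
  set n := ‖x‖
  set m := ‖x + w‖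
  have hn : 0 ≤ n := norm_nonneg _
  have hnm : n ≤ m + Cu := (norm_le_add_norm_add x w).trans (by gcongr)
  have hconv : κ₀ / (4 * 2 ^ ϑ * (1 + Cu)) * (m ^ ϑ * √(1 + m ^ 2)) ≤
      κ₀ / 4 * n ^ ϑ * √(1 + n ^ 2) + κ₀ / 4 * Cu ^ ϑ * √(1 + m ^ 2) :=
    calc _ ≤ κ₀ / (4 * 2 ^ ϑ * (1 + Cu)) *
          (2 ^ ϑ * ((1 + Cu) * (n ^ ϑ * √(1 + n ^ 2)) + Cu ^ ϑ * √(1 + m ^ 2))) := by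
          refine mul_le_mul_of_nonneg_left ?_ (by positivity)
          exact rpow_mul_sqrt_one_add_sq_le (norm_nonneg _) hn hCu hϑ
            ((norm_add_le _ _).trans (by gcongr))
      _ = κ₀ / 4 * n ^ ϑ * √(1 + n ^ 2) + κ₀ / (4 * (1 + Cu)) * Cu ^ ϑ * √(1 + m ^ 2) := by
          field_simp
      _ ≤ _ := by gcongr; linarith
  rw [div_le_iff₀ (sqrt_pos.2 (by positivity))]
  linarith [hinner x w b v hw hdiss hgrowth hv]

lemma exists_norm_drift_le (hϑ : 0 ≤ ϑ) (hκ₂ : 0 < κ₂) (hCu : 0 ≤ Cu) (hε : ε ≤ 1) :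
    ∃ κ₂' > 0, ∀ x w b v : E, ‖w‖ ≤ Cu → ‖b‖ ≤ κ₂ * (1 + ‖x‖ ^ ϑ) → ‖v‖ ≤ ε * ‖b‖ →
      ‖lam • w + (b + v)‖ ≤ κ₂' * (1 + ‖x + w‖ ^ ϑ) := by
  refine ⟨|lam| * Cu + 2 * κ₂ * (1 + 2 ^ ϑ * (1 + Cu ^ ϑ)), by positivity,
    fun x w b v hw hgrowth hv => ?_⟩
  set m := ‖x + w‖
  have hnm : ‖x‖ ≤ m + Cu := (norm_le_add_norm_add x w).trans (by gcongr)
  have hxϑ : ‖x‖ ^ ϑ ≤ 2 ^ ϑ * (m ^ ϑ + Cu ^ ϑ) :=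
    (rpow_le_rpow (norm_nonneg _) hnm hϑ).trans
      (add_rpow_le_two_rpow_mul_rpow_add_rpow (norm_nonneg _) hCu hϑ)
  have hv' : ‖v‖ ≤ ‖b‖ := hv.trans (mul_le_of_le_one_left (norm_nonneg _) hε)
  calc ‖lam • w + (b + v)‖ ≤ |lam| * Cu + 2 * κ₂ * (1 + ‖x‖ ^ ϑ) := by
        grw [norm_add_le, norm_add_le, norm_smul, norm_eq_abs, hv', hw, hgrowth]; linarith
    _ ≤ |lam| * Cu + 2 * κ₂ * (1 + 2 ^ ϑ * (m ^ ϑ + Cu ^ ϑ)) := by gcongr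
    _ ≤ _ := by
        have : 0 ≤ m ^ ϑ := rpow_nonneg (norm_nonneg _) ϑ
        linarith [mul_nonneg (mul_nonneg (abs_nonneg lam) hCu) this, mul_nonneg hκ₂.le this,
          mul_nonneg hκ₂.le (rpow_nonneg zero_le_two ϑ),
          mul_nonneg (mul_nonneg hκ₂.le (rpow_nonneg zero_le_two ϑ)) (mul_nonneg this
            (rpow_nonneg hCu ϑ))]

lemma fderiv_id_add_apply {u : E → E} {x : E} (hu : DifferentiableAt ℝ u x) (v : E) :
    fderiv ℝ (fun x => x + u x) x v = v + fderiv ℝ u x v := by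
  rw [fderiv_fun_add differentiableAt_fun_id hu, fderiv_fun_id]
  rfl

end Drift

/-- Preservation of the dissipativity structure of the drift under Zvonkin's transformation
Φ = id + u, provided ‖∇u‖_∞ is small enough (depending only on κ₀, κ₁, κ₂, ϑ). -/
theorem dissipativity_preserved (d : ℕ) (ϑ κ₀ κ₁ κ₂ : ℝ)
    (hϑ : 0 < ϑ) (hκ₀ : 0 < κ₀) (hκ₁ : 0 < κ₁) (hκ₂ : 0 < κ₂) :
    ∃ ε > (0 : ℝ),
      ∀ (b1 u Ψ : EuclideanSpace ℝ (Fin d) → EuclideanSpace ℝ (Fin d)) (lam : ℝ),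
        0 < lam →
        (∀ x, ⟪x, b1 x⟫ / Real.sqrt (1 + ‖x‖ ^ 2) ≤ -κ₀ * ‖x‖ ^ ϑ + κ₁) →
        (∀ x, ‖b1 x‖ ≤ κ₂ * (1 + ‖x‖ ^ ϑ)) →
        ContDiff ℝ 1 u → (∃ Cu : ℝ, ∀ x, ‖u x‖ ≤ Cu) →
        (∀ x, ‖fderiv ℝ u x‖ ≤ ε) →
        Function.LeftInverse Ψ (fun x => x + u x) →
        Function.RightInverse Ψ (fun x => x + u x) →
        (∀ x y, (1 / 2) * ‖x - y‖ ≤ ‖(x + u x) - (y + u y)‖ ∧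
          ‖(x + u x) - (y + u y)‖ ≤ 2 * ‖x - y‖) →
        ∃ κ₀' > (0 : ℝ), ∃ κ₁' > (0 : ℝ), ∃ κ₂' > (0 : ℝ), ∀ y,
          ⟪y, lam • u (Ψ y) + fderiv ℝ (fun x => x + u x) (Ψ y) (b1 (Ψ y))⟫ /
              Real.sqrt (1 + ‖y‖ ^ 2) ≤ -κ₀' * ‖y‖ ^ ϑ + κ₁' ∧
          ‖lam • u (Ψ y) + fderiv ℝ (fun x => x + u x) (Ψ y) (b1 (Ψ y))‖ ≤
            κ₂' * (1 + ‖y‖ ^ ϑ) := by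
  set ε := min 1 (κ₀ / (2 * κ₂))
  have hεκ : ε * κ₂ ≤ κ₀ / 2 :=
    (mul_le_mul_of_nonneg_right (min_le_right _ _) hκ₂.le).trans_eq (by field_simp)
  refine ⟨ε, by positivity, fun b1 u Ψ lam _ hdiss hgrowth hu ⟨Cu, hCu⟩ hDu hΨl hΨr _ => ?_⟩
  have hCu0 : 0 ≤ Cu := (norm_nonneg _).trans (hCu 0)
  obtain ⟨κ₀', hκ₀', κ₁', hκ₁', hinner⟩ := exists_inner_drift_div_le (lam := lam)
    (E := EuclideanSpace ℝ (Fin d)) hϑ.le hκ₀ hκ₁.le hκ₂.le hCu0 (by positivity) hεκ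
  obtain ⟨κ₂', hκ₂', hnorm⟩ := exists_norm_drift_le (lam := lam)
    (E := EuclideanSpace ℝ (Fin d)) hϑ.le hκ₂ hCu0 (min_le_left 1 _)
  refine ⟨κ₀', hκ₀', κ₁', hκ₁', κ₂', hκ₂', fun y => ?_⟩
  obtain ⟨x, rfl⟩ := hΨr.surjective y
  have hDb := (fderiv ℝ u x).le_of_opNorm_le (hDu x) (b1 x)
  rw [hΨl x, fderiv_id_add_apply (hu.differentiable one_ne_zero x)]
  exact ⟨hinner x (u x) (b1 x) _ (hCu x) (hdiss x) (hgrowth x) hDb,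
    hnorm x (u x) (b1 x) _ (hCu x) (hgrowth x) hDb⟩
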